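/- Let H = ℓ²(ℕ) with orthonormal basis (eₙ) and, for q ∈ (0,1), l ≥ 1, 1 ≤ r ≤ l, define A(eₙ) = q^{2(ln+r)} eₙ, B(eₙ) = q^{ln+r} ∏_{m=1}^{l}(1 − q^{2(ln+r−m)})^{1/2} e_{n−1} (B(e₀)=0), and C(eₙ) = ∏_{m=1}^{2l}(1 − q^{2(ln+r−m)})^{1/2} e_{n−2} (C(e₀)=C(e₁)=0). Then B² = q^{3l} A C and B C = q^{−2l} C B. -/

import Mathlib

/-! `A`, `B`, `C` are weighted shifts of degrees `0`, `1`, `2`, so both relations reduce to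
identities between their weights. Put `N n = l(n+1)+r` and let `p n` be the `l`-fold product of
square roots in `B(e_{n+1})`, so that `B` has weights `q^{N n} p n`. Since `N (n+1) - l = N n`, the
`2l`-fold product in `C(e_{n+2})` splits as `p (n+1) p n`. The relations then come down to
`N n + N (n+1) = 3l + 2(ln+r)` and `N (n+2) - 2l = N n`. -/

noncomputable section

abbrev H : Type := lp (fun _ : ℕ => ℂ) 2

def e (n : ℕ) : H := lp.single 2 n 1

theorem ContinuousLinearMap.ext_e {T S : H →L[ℂ] H} (h : ∀ n, T (e n) = S (e n)) : T = S := by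
  refine ContinuousLinearMap.ext fun f => ?_
  have hf : HasSum (fun n => f n • e n) f := by
    simpa [e, ← lp.single_smul] using lp.hasSum_single (E := fun _ : ℕ => ℂ) (by norm_num) f
  exact (hf.mapL T).unique (by simpa only [map_smul, h] using hf.mapL S)

section WeightedShift

variable {A B C : H →L[ℂ] H} {a b c : ℕ → ℂ}

theorem mul_self_eq_smul_mul_of_weights (s : ℂ) (hA : ∀ n, A (e n) = a n • e n)
    (hB0 : B (e 0) = 0) (hB : ∀ n, B (e (n + 1)) = b n • e n)
    (hC0 : C (e 0) = 0) (hC1 : C (e 1) = 0) (hC : ∀ n, C (e (n + 2)) = c n • e n)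
    (hw : ∀ n, b (n + 1) * b n = s * (c n * a n)) :
    B * B = s • (A * C) := by
  refine ContinuousLinearMap.ext_e fun n => ?_
  match n with
  | 0 => simp [hB0, hC0]
  | 1 => simp [hB, hB0, hC1]
  | n + 2 =>
    simp only [mul_apply_eq_comp, smul_apply, hA, hB, hC, map_smul, smul_smul, hw]

theorem mul_eq_smul_mul_of_weights (s : ℂ)
    (hB0 : B (e 0) = 0) (hB : ∀ n, B (e (n + 1)) = b n • e n)
    (hC0 : C (e 0) = 0) (hC1 : C (e 1) = 0) (hC : ∀ n, C (e (n + 2)) = c n • e n)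
    (hw : ∀ n, c (n + 1) * b n = s * (b (n + 2) * c n)) :
    B * C = s • (C * B) := by
  refine ContinuousLinearMap.ext_e fun n => ?_
  match n with
  | 0 => simp [hB0, hC0]
  | 1 => simp [hB, hC0, hC1]
  | 2 => simp [hB, hC, hB0, hC1]
  | n + 3 =>
    simp only [mul_apply_eq_comp, smul_apply, hB, hC, map_smul, smul_smul, hw]

end WeightedShift

def sqrtProd (q : ℝ) (N : ℤ) (k : ℕ) : ℝ :=
  ∏ m ∈ Finset.range k, Real.sqrt (1 - q ^ (2 * (N - ((m : ℤ) + 1))))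

theorem sqrtProd_add (q : ℝ) (N : ℤ) (j k : ℕ) :
    sqrtProd q N (j + k) = sqrtProd q N j * sqrtProd q (N - j) k := by
  rw [sqrtProd, Finset.prod_range_add]
  congr 1
  refine Finset.prod_congr rfl fun m _ => ?_
  congr 4
  push_cast
  ring

theorem rep_minus_relations_general (q : ℝ) (hq : q ∈ Set.Ioo (0 : ℝ) 1)
    (l r : ℕ) (A B C : H →L[ℂ] H)
    (hA : ∀ n : ℕ, A (e n) = ((q ^ (2 * (l * n + r)) : ℝ) : ℂ) • e n)
    (hB0 : B (e 0) = 0)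
    (hB : ∀ n : ℕ, B (e (n + 1)) =
      ((q ^ (l * (n + 1) + r) *
          ∏ m ∈ Finset.range l,
            Real.sqrt (1 - q ^ (2 * ((l * (n + 1) + r : ℤ) - ((m : ℤ) + 1)))) : ℝ) : ℂ) • e n)
    (hC0 : C (e 0) = 0) (hC1 : C (e 1) = 0)
    (hC : ∀ n : ℕ, C (e (n + 2)) =
      ((∏ m ∈ Finset.range (2 * l),
          Real.sqrt (1 - q ^ (2 * ((l * (n + 2) + r : ℤ) - ((m : ℤ) + 1)))) : ℝ) : ℂ) • e n) :
    B * B = ((q : ℂ) ^ (3 * l)) • (A * C) ∧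
    B * C = ((q : ℂ) ^ (-(2 * (l : ℤ)))) • (C * B) := by
  set p : ℕ → ℝ := fun n => sqrtProd q (l * (n + 1) + r) l
  have hC' : ∀ n : ℕ, C (e (n + 2)) = ((p (n + 1) * p n : ℝ) : ℂ) • e n := fun n => by
    have hshift : (l * (n + 2) + r : ℤ) - l = l * (n + 1) + r := by ring
    rw [hC, ← sqrtProd, two_mul, sqrtProd_add, hshift]
    push_cast [p]
    ring_nf
  have hB' : ∀ n : ℕ, B (e (n + 1)) = ((q ^ (l * (n + 1) + r) * p n : ℝ) : ℂ) • e n := hB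
  have hq0 : (q : ℂ) ≠ 0 := by exact_mod_cast hq.1.ne'
  refine ⟨mul_self_eq_smul_mul_of_weights _ hA hB0 hB' hC0 hC1 hC' fun n => ?_,
    mul_eq_smul_mul_of_weights _ hB0 hB' hC0 hC1 hC' fun n => ?_⟩
  · push_cast
    ring
  · have hexp : l * (n + 2 + 1) + r = 2 * l + (l * (n + 1) + r) := by ring
    have hs : (q : ℂ) ^ (-(2 * (l : ℤ))) = ((q : ℂ) ^ (2 * l))⁻¹ := by
      rw [zpow_neg]; norm_cast
    push_cast [hs, hexp, pow_add]
    field_simp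

/-- For the operators `A(eₙ) = q^{2(ln+r)} eₙ`,
`B(eₙ) = q^{ln+r} ∏_{m=1}^{l}(1 − q^{2(ln+r−m)})^{1/2} e_{n−1}` (`B(e₀)=0`) and
`C(eₙ) = ∏_{m=1}^{2l}(1 − q^{2(ln+r−m)})^{1/2} e_{n−2}` (`C(e₀)=C(e₁)=0`) one has
`B² = q^{3l} A C` and `B C = q^{−2l} C B`. -/
theorem rep_minus_relations (q : ℝ) (hq : q ∈ Set.Ioo (0 : ℝ) 1)
    (l r : ℕ) (hl : 1 ≤ l) (hr1 : 1 ≤ r) (hrl : r ≤ l)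
    (A B C : H →L[ℂ] H)
    (hA : ∀ n : ℕ, A (e n) = ((q ^ (2 * (l * n + r)) : ℝ) : ℂ) • e n)
    (hB0 : B (e 0) = 0)
    (hB : ∀ n : ℕ, B (e (n + 1)) =
      ((q ^ (l * (n + 1) + r) *
          ∏ m ∈ Finset.range l,
            Real.sqrt (1 - q ^ (2 * ((l * (n + 1) + r : ℤ) - ((m : ℤ) + 1)))) : ℝ) : ℂ) • e n)
    (hC0 : C (e 0) = 0) (hC1 : C (e 1) = 0)
    (hC : ∀ n : ℕ, C (e (n + 2)) =
      ((∏ m ∈ Finset.range (2 * l),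
          Real.sqrt (1 - q ^ (2 * ((l * (n + 2) + r : ℤ) - ((m : ℤ) + 1)))) : ℝ) : ℂ) • e n) :
    B * B = ((q : ℂ) ^ (3 * l)) • (A * C) ∧
    B * C = ((q : ℂ) ^ (-(2 * (l : ℤ)))) • (C * B) :=
  rep_minus_relations_general q hq l r A B C hA hB0 hB hC0 hC1 hC

end
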